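/- Let φ = c₁ ∧ … ∧ c_m be a CNF formula over variables v₁, …, v_n. Define a propositional Horn theory T over atoms {X, A} ∪ {P_i, N_i : 1 ≤ i ≤ n} ∪ {C_j : 1 ≤ j ≤ m} consisting of the rules: P_i ∧ N_i → A for each i; P_i → C_j whenever v_i occurs positively in c_j; N_i → C_j whenever v_i occurs negatively in c_j; and X ∧ C₁ ∧ … ∧ C_m → A. Let F = {X} ∪ {P_i : i} ∪ {N_i : i} be the set of input facts. Then there exists a minimal (under set inclusion) subset S ⊆ F with X ∈ S such that S together with T entails A, if and only if φ is satisfiable. -/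
import Mathlib


/-- Atoms of the Horn theory in the SAT reduction. -/
inductive SatAtom (n m : ℕ) where
  | X : SatAtom n m
  | A : SatAtom n m
  | P : Fin n → SatAtom n m
  | N : Fin n → SatAtom n m
  | C : Fin m → SatAtom n m
deriving DecidableEq

/-- Propositional Horn entailment via forward chaining (closure characterization). -/
def Horn.entails {α : Type} (T : Set (Finset α × α)) (S : Set α) (a : α) : Prop :=
  ∀ M : Set α, S ⊆ M → (∀ r ∈ T, (↑r.1 : Set α) ⊆ M → r.2 ∈ M) → a ∈ M

open SatAtom in
/-- The Horn theory of the reduction: `P_i ∧ N_i → A`; `P_i → C_j` when `v_i ∈ c_j`;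
`N_i → C_j` when `¬v_i ∈ c_j`; `X ∧ C_1 ∧ ⋯ ∧ C_m → A`.
Clause `c_j` has positive literals `pos j` and negative literals `neg j`. -/
def satTheory (n m : ℕ) (pos neg : Fin m → Finset (Fin n)) :
    Set (Finset (SatAtom n m) × SatAtom n m) :=
  { r | (∃ i, r = ({P i, N i}, A))
      ∨ (∃ i j, i ∈ pos j ∧ r = ({P i}, C j))
      ∨ (∃ i j, i ∈ neg j ∧ r = ({N i}, C j))
      ∨ r = (insert X (Finset.univ.image C), A) }

open SatAtom in
/-- The input facts `F = {X} ∪ {P_i} ∪ {N_i}`. -/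
def satFacts (n m : ℕ) : Finset (SatAtom n m) :=
  insert X (Finset.univ.image P ∪ Finset.univ.image N)

/-- Satisfiability of the CNF `φ = c_1 ∧ ⋯ ∧ c_m`. -/
def cnfSat (n m : ℕ) (pos neg : Fin m → Finset (Fin n)) : Prop :=
  ∃ σ : Fin n → Bool, ∀ j, (∃ i ∈ pos j, σ i = true) ∨ (∃ i ∈ neg j, σ i = false)

open SatAtom in
/-- If `S` contains no complementary pair and not `X`, it does not support `A`. -/
lemma aux_notEntails {n m : ℕ} (pos neg : Fin m → Finset (Fin n))
    (S : Finset (SatAtom n m)) (hA : A ∉ S) (hX : X ∉ S)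
    (hnp : ∀ i : Fin n, ¬ (P i ∈ S ∧ N i ∈ S)) :
    ¬ Horn.entails (satTheory n m pos neg) ↑S A := by
  intro h
  have hm := h (↑S ∪ Set.range (C : Fin m → SatAtom n m)) Set.subset_union_left ?_
  · rcases hm with hm | ⟨j, hj⟩
    · exact hA hm
    · cases hj
  · rintro ⟨r1, r2⟩ hr hsub
    rcases hr with ⟨i, hr⟩ | ⟨i, j, hij, hr⟩ | ⟨i, j, hij, hr⟩ | hr <;>
      injection hr with h1 h2 <;> subst h1 <;> subst h2
    · exfalso
      have hp : (P i : SatAtom n m) ∈ (↑S ∪ Set.range (C : Fin m → SatAtom n m) : Set _) := by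
        apply hsub; simp
      have hq : (N i : SatAtom n m) ∈ (↑S ∪ Set.range (C : Fin m → SatAtom n m) : Set _) := by
        apply hsub; simp
      rcases hp with hp | ⟨j, hj⟩
      · rcases hq with hq | ⟨j, hj⟩
        · exact hnp i ⟨hp, hq⟩
        · cases hj
      · cases hj
    · exact Or.inr ⟨j, rfl⟩
    · exact Or.inr ⟨j, rfl⟩
    · exfalso
      have hx : (X : SatAtom n m) ∈ (↑S ∪ Set.range (C : Fin m → SatAtom n m) : Set _) := by
        apply hsub; simp
      rcases hx with hx | ⟨j, hj⟩
      · exact hX hx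
      · cases hj

open SatAtom in
/-- If `S ⊆ F` has no complementary pair and supports `A`, every clause is hit by `S`. -/
lemma aux_allClauses {n m : ℕ} (pos neg : Fin m → Finset (Fin n))
    (S : Finset (SatAtom n m)) (hSF : S ⊆ satFacts n m)
    (hnp : ∀ i : Fin n, ¬ (P i ∈ S ∧ N i ∈ S))
    (h : Horn.entails (satTheory n m pos neg) ↑S A) :
    ∀ j : Fin m, (∃ i ∈ pos j, P i ∈ S) ∨ (∃ i ∈ neg j, N i ∈ S) := by
  have hA : (A : SatAtom n m) ∉ S := fun hc => by
    have := hSF hc; simp [satFacts] at this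
  have hC : ∀ j : Fin m, (C j : SatAtom n m) ∉ S := fun j hc => by
    have := hSF hc; simp [satFacts] at this
  by_contra hcon
  push_neg at hcon
  obtain ⟨j0, hj0p, hj0n⟩ := hcon
  set M : Set (SatAtom n m) := ↑S ∪ {x | ∃ j : Fin m, j ≠ j0 ∧ x = C j} with hM
  have hm := h M Set.subset_union_left ?_
  · rcases hm with hm | ⟨j, _, hj⟩
    · exact hA hm
    · cases hj
  · rintro ⟨r1, r2⟩ hr hsub
    rcases hr with ⟨i, hr⟩ | ⟨i, j, hij, hr⟩ | ⟨i, j, hij, hr⟩ | hr <;>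
      injection hr with h1 h2 <;> subst h1 <;> subst h2
    · exfalso
      have hp : (P i : SatAtom n m) ∈ M := by apply hsub; simp
      have hq : (N i : SatAtom n m) ∈ M := by apply hsub; simp
      rcases hp with hp | ⟨j, _, hj⟩
      · rcases hq with hq | ⟨j, _, hj⟩
        · exact hnp i ⟨hp, hq⟩
        · cases hj
      · cases hj
    · -- P i → C j
      by_cases hj : j = j0
      · subst hj
        have hp : (P i : SatAtom n m) ∈ M := by apply hsub; simp
        rcases hp with hp | ⟨j', _, hj'⟩
        · exact absurd hp (hj0p i hij)
        · cases hj'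
      · exact Or.inr ⟨j, hj, rfl⟩
    · by_cases hj : j = j0
      · subst hj
        have hp : (N i : SatAtom n m) ∈ M := by apply hsub; simp
        rcases hp with hp | ⟨j', _, hj'⟩
        · exact absurd hp (hj0n i hij)
        · cases hj'
      · exact Or.inr ⟨j, hj, rfl⟩
    · -- X-rule: its premise contains C j0 which is not in M
      exfalso
      have hcj : (C j0 : SatAtom n m) ∈ M := by
        apply hsub
        simp
      rcases hcj with hcj | ⟨j, hj, hj'⟩
      · exact hC j0 hcj
      · injection hj' with h; exact hj h.symm

open SatAtom in
/-- There is a minimal support `S ⊆ F` for `A` with `X ∈ S` iff `φ` is satisfiable. -/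
theorem stmt1 (n m : ℕ) (pos neg : Fin m → Finset (Fin n)) :
    (∃ S ⊆ satFacts n m, SatAtom.X ∈ S ∧
        Horn.entails (satTheory n m pos neg) ↑S SatAtom.A ∧
        ∀ S' ⊂ S, ¬ Horn.entails (satTheory n m pos neg) ↑S' SatAtom.A)
    ↔ cnfSat n m pos neg := by
  constructor
  · rintro ⟨S, hSF, hXS, hent, hmin⟩
    -- no complementary pair in S
    have hnp : ∀ i : Fin n, ¬ (P i ∈ S ∧ N i ∈ S) := by
      rintro i ⟨hp, hq⟩
      have hsub : ({P i, N i} : Finset (SatAtom n m)) ⊂ S := by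
        constructor
        · intro x hx; simp at hx; rcases hx with rfl | rfl <;> assumption
        · intro hc
          have := hc hXS
          simp at this
      refine hmin _ hsub ?_
      intro M hSM hcl
      exact hcl ({P i, N i}, A) (Or.inl ⟨i, rfl⟩) (by
        intro x hx; simp at hx; rcases hx with rfl | rfl <;> apply hSM <;> simp)
    refine ⟨fun i => decide (P i ∈ S), fun j => ?_⟩
    rcases aux_allClauses pos neg S hSF hnp hent j with ⟨i, hi, hp⟩ | ⟨i, hi, hq⟩
    · exact Or.inl ⟨i, hi, by simp [hp]⟩
    · refine Or.inr ⟨i, hi, ?_⟩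
      simp only [decide_eq_false_iff_not]
      exact fun hp => hnp i ⟨hp, hq⟩
  · rintro ⟨σ, hσ⟩
    set S0 : Finset (SatAtom n m) :=
      insert X ((Finset.univ.filter (fun i => σ i = true)).image P ∪
                (Finset.univ.filter (fun i => σ i = false)).image N) with hS0
    have hS0F : S0 ⊆ satFacts n m := by
      intro x hx
      simp [hS0] at hx
      simp [satFacts]
      rcases hx with rfl | ⟨i, _, rfl⟩ | ⟨i, _, rfl⟩
      · exact Or.inl rfl
      · exact Or.inr (Or.inl ⟨i, rfl⟩)
      · exact Or.inr (Or.inr ⟨i, rfl⟩)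
    have hnp0 : ∀ i : Fin n, ¬ (P i ∈ S0 ∧ N i ∈ S0) := by
      rintro i ⟨hp, hq⟩
      simp [hS0] at hp hq
      rw [hp] at hq; cases hq
    have hent0 : Horn.entails (satTheory n m pos neg) ↑S0 A := by
      intro M hSM hcl
      have hCj : ∀ j : Fin m, (C j : SatAtom n m) ∈ M := by
        intro j
        rcases hσ j with ⟨i, hi, hb⟩ | ⟨i, hi, hb⟩
        · refine hcl ({P i}, C j) (Or.inr (Or.inl ⟨i, j, hi, rfl⟩)) ?_
          intro x hx; simp at hx; subst hx
          exact hSM (by simp [hS0, hb])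
        · refine hcl ({N i}, C j) (Or.inr (Or.inr (Or.inl ⟨i, j, hi, rfl⟩))) ?_
          intro x hx; simp at hx; subst hx
          exact hSM (by simp [hS0, hb])
      refine hcl (insert X (Finset.univ.image C), A) (Or.inr (Or.inr (Or.inr rfl))) ?_
      intro x hx
      simp at hx
      rcases hx with rfl | ⟨j, rfl⟩
      · exact hSM (by simp [hS0])
      · exact hCj j
    -- pick a minimal support inside S0
    obtain ⟨S, ⟨hSsub, hSent⟩, hSmin⟩ :=
      (Finset.isWellFounded_ssubset (α := SatAtom n m)).wf.has_min
        {T | T ⊆ S0 ∧ Horn.entails (satTheory n m pos neg) ↑T A}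
        ⟨S0, subset_rfl, hent0⟩
    have hmin : ∀ S' ⊂ S, ¬ Horn.entails (satTheory n m pos neg) ↑S' A := by
      intro S' hlt hent'
      exact hSmin S' ⟨hlt.subset.trans hSsub, hent'⟩ hlt
    have hXS : X ∈ S := by
      by_contra hX
      have hA : (A : SatAtom n m) ∉ S := fun hc => by
        have := hS0F (hSsub hc); simp [satFacts] at this
      exact aux_notEntails pos neg S hA hX
        (fun i hc => hnp0 i ⟨hSsub hc.1, hSsub hc.2⟩) hSent
    exact ⟨S, hSsub.trans hS0F, hXS, hSent, hmin⟩
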